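/- Let l : X → ℝ and let H : [0,T] × X × ℝⁿ → ℝ be a Hamiltonian. Suppose f : X → X is a differentiable bijection such that l(x) = l(f(x)) for all x, and such that H(t, x, ∇ₓV(t,x)) = H(t, f(x), ∇_f V(t,f(x))) for all t ∈ [0,T], x ∈ X, where V satisfies ∂V/∂t(t,x) + min{H(t,x,∇ₓV(t,x)), 0} = 0 with V(T,x) = l(x). Then V(t,x) = V(t,f(x)) for all t ∈ [0,T] and x ∈ X. -/

import Mathlib

/-!
By the PDE, the time derivatives of `V(·, x)` and `V(·, f x)` are both `-min{H, 0}` at the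
respective points, and these agree by the symmetry of the Hamiltonian. So the two curves differ
by a constant on `[0, T]`, which vanishes because `l` is `f`-invariant at the terminal time.
-/

open Set

theorem eq_of_derivWithin_eq_of_eq_right {E : Type*} [NormedAddCommGroup E] [NormedSpace ℝ E]
    {a b : ℝ} {f g : ℝ → E} (hf : DifferentiableOn ℝ f (Icc a b))
    (hg : DifferentiableOn ℝ g (Icc a b))
    (hderiv : EqOn (derivWithin f (Icc a b)) (derivWithin g (Icc a b)) (Ico a b))
    (hb : f b = g b) : ∀ y ∈ Icc a b, f y = g y := by
  intro y hy
  have hconst : ∀ x ∈ Icc a b, (f - g) x = (f - g) a :=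
    constant_of_derivWithin_zero (hf.sub hg) fun x hx => by
      rw [derivWithin_sub (hf x (mem_Icc_of_Ico hx)) (hg x (mem_Icc_of_Ico hx)),
        hderiv hx, sub_self]
  have hdiff_b : (f - g) b = 0 := sub_eq_zero.mpr hb
  rw [← sub_eq_zero, ← Pi.sub_apply, hconst y hy,
    ← hconst b (right_mem_Icc.mpr (hy.1.trans hy.2)), hdiff_b]

theorem stmt_2_general {n : ℕ} (T : ℝ)
    (X : Set (EuclideanSpace ℝ (Fin n)))
    (f : EuclideanSpace ℝ (Fin n) → EuclideanSpace ℝ (Fin n))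
    (hfbij : Set.BijOn f X X)
    (l : EuclideanSpace ℝ (Fin n) → ℝ)
    (hl : ∀ x ∈ X, l x = l (f x))
    (H : ℝ → EuclideanSpace ℝ (Fin n) → EuclideanSpace ℝ (Fin n) → ℝ)
    (V : ℝ → EuclideanSpace ℝ (Fin n) → ℝ)
    (hVt : ∀ x ∈ X, DifferentiableOn ℝ (fun t => V t x) (Set.Icc 0 T))
    (hHsym : ∀ t ∈ Set.Icc (0:ℝ) T, ∀ x ∈ X,
      H t x (gradient (fun y => V t y) x) = H t (f x) (gradient (fun y => V t y) (f x)))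
    (hPDE : ∀ t ∈ Set.Icc (0:ℝ) T, ∀ x ∈ X,
      derivWithin (fun s => V s x) (Set.Icc 0 T) t
        + min (H t x (gradient (fun y => V t y) x)) 0 = 0)
    (hterm : ∀ x ∈ X, V T x = l x) :
    ∀ t ∈ Set.Icc (0:ℝ) T, ∀ x ∈ X, V t x = V t (f x) := by
  intro t ht x hx
  have hfx : f x ∈ X := hfbij.mapsTo hx
  have hderiv : EqOn (derivWithin (fun s => V s x) (Icc 0 T))
      (derivWithin (fun s => V s (f x)) (Icc 0 T)) (Ico 0 T) := fun s hs => by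
    have hx_pde := hPDE s (mem_Icc_of_Ico hs) x hx
    have hfx_pde := hPDE s (mem_Icc_of_Ico hs) (f x) hfx
    rw [hHsym s (mem_Icc_of_Ico hs) x hx] at hx_pde
    linarith
  have hT_eq : V T x = V T (f x) := by rw [hterm x hx, hterm (f x) hfx, hl x hx]
  exact eq_of_derivWithin_eq_of_eq_right (hVt x hx) (hVt (f x) hfx) hderiv hT_eq t ht

/-- Symmetry of the HJI value function: if a differentiable bijection `f` of the
state space preserves the boundary function `l` and the Hamiltonian along `V`, and
`V` solves the HJI PDE `∂V/∂t + min{H(t,x,∇ₓV),0} = 0` with terminal condition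
`V(T,·) = l`, then `V(t,x) = V(t, f(x))` for all `t ∈ [0,T]` and `x ∈ X`. -/
theorem stmt_2 {n : ℕ} (T : ℝ) (hT : 0 < T)
    (X : Set (EuclideanSpace ℝ (Fin n))) (hX : IsOpen X)
    (f : EuclideanSpace ℝ (Fin n) → EuclideanSpace ℝ (Fin n))
    (hfbij : Set.BijOn f X X) (hfdiff : Differentiable ℝ f)
    (l : EuclideanSpace ℝ (Fin n) → ℝ)
    (hl : ∀ x ∈ X, l x = l (f x))
    (H : ℝ → EuclideanSpace ℝ (Fin n) → EuclideanSpace ℝ (Fin n) → ℝ)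
    (V : ℝ → EuclideanSpace ℝ (Fin n) → ℝ)
    (hVx : ∀ t ∈ Set.Icc (0:ℝ) T, ∀ x ∈ X, DifferentiableAt ℝ (fun y => V t y) x)
    (hVt : ∀ x ∈ X, DifferentiableOn ℝ (fun t => V t x) (Set.Icc 0 T))
    (hHsym : ∀ t ∈ Set.Icc (0:ℝ) T, ∀ x ∈ X,
      H t x (gradient (fun y => V t y) x) = H t (f x) (gradient (fun y => V t y) (f x)))
    (hPDE : ∀ t ∈ Set.Icc (0:ℝ) T, ∀ x ∈ X,
      derivWithin (fun s => V s x) (Set.Icc 0 T) t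
        + min (H t x (gradient (fun y => V t y) x)) 0 = 0)
    (hterm : ∀ x ∈ X, V T x = l x) :
    ∀ t ∈ Set.Icc (0:ℝ) T, ∀ x ∈ X, V t x = V t (f x) :=
  stmt_2_general T X f hfbij l hl H V hVt hHsym hPDE hterm
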